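/- arXiv:2012.02944 — 2 statements merged into one kernel-verified Lean document; each statement's English description precedes it below -/
import Mathlib

section
/- (One-sided-error query bound in terms of fidelity.) Let U₁, U₂ be n×n complex unitary matrices and consider a T-query discrimination procedure with an m-dimensional ancilla, with output states Φᵢ = W_T(Uᵢ ⊗ I)W_{T−1}(Uᵢ ⊗ I)⋯W₁(Uᵢ ⊗ I)W₀φ₀ for i = 1, 2. If ε ∈ [0, 1] and there is a three-outcome POVM (Π₀, Π₁, Π₂) with ⟨Φ₂, Π₁Φ₂⟩ = ⟨Φ₁, Π₂Φ₁⟩ = 0 and ⟨Φᵢ, Π₀Φᵢ⟩ ≤ ε for i = 1, 2, then T·√(1 − F(U₁, U₂)²) ≥ √(1 − ε²). -/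
/-!
For unit vectors put `D(u, v) = √(1 - |⟨u, v⟩|²)`, the distance from `u` to the line through `v`;
it satisfies the triangle inequality. Outcomes 1 and 2 annihilate `Φ₂` and `Φ₁` respectively, so
`⟨Φ₁, Φ₂⟩ = ⟨Φ₁, Π₀ Φ₂⟩`, and Cauchy–Schwarz for `Π₀` gives `|⟨Φ₁, Φ₂⟩| ≤ ε`, i.e.
`D(Φ₁, Φ₂) ≥ √(1 - ε²)`. In the other direction, a hybrid argument bounds `D(Φ₁, Φ₂)` by `T` times
the largest single-query distance `D((U₁ ⊗ I)ψ, (U₂ ⊗ I)ψ) = √(1 - |⟨ψ, (U₁†U₂ ⊗ I)ψ⟩|²)`. This is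
at most `√(1 - F²)` because `U₁†U₂` is normal: in an orthonormal eigenbasis, `⟨ψ, (U₁†U₂ ⊗ I)ψ⟩` is
a convex combination of eigenvalues, which is also attained as `⟨ψ', U₁†U₂ ψ'⟩` by a unit vector
`ψ'` on the system alone.
-/

open Matrix Kronecker ComplexOrder

/-- The fidelity of two unitary matrices: the infimum of `|⟨ψ, U₁†U₂ ψ⟩|` over
unit vectors `ψ`. -/
noncomputable def unitaryFidelity (n : ℕ) (U₁ U₂ : Matrix (Fin n) (Fin n) ℂ) : ℝ :=
  sInf { r : ℝ | ∃ ψ : Fin n → ℂ, star ψ ⬝ᵥ ψ = 1 ∧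
    r = ‖star ψ ⬝ᵥ ((U₁ᴴ * U₂) *ᵥ ψ)‖ }

open scoped InnerProductSpace

section PureStateDist

variable (𝕜 : Type*) {E : Type*} [RCLike 𝕜] [NormedAddCommGroup E] [InnerProductSpace 𝕜 E]

/-- For unit vectors, the trace distance between the pure states `|u⟩⟨u|` and `|v⟩⟨v|`. -/
noncomputable def pureStateDist (u v : E) : ℝ := √(1 - ‖⟪u, v⟫_𝕜‖ ^ 2)

variable {𝕜}

lemma norm_sub_smul_sq {v : E} (hv : ‖v‖ = 1) (u : E) (c : 𝕜) :
    ‖u - c • v‖ ^ 2 = ‖u - ⟪v, u⟫_𝕜 • v‖ ^ 2 + ‖⟪v, u⟫_𝕜 - c‖ ^ 2 := by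
  have horth : ⟪u - ⟪v, u⟫_𝕜 • v, (⟪v, u⟫_𝕜 - c) • v⟫_𝕜 = 0 := by
    rw [inner_smul_right, inner_sub_left, inner_smul_left, inner_self_eq_norm_sq_to_K, hv,
      inner_conj_symm]
    simp
  have h := norm_add_sq_eq_norm_sq_add_norm_sq_of_inner_eq_zero _ _ horth
  have hsum : u - ⟪v, u⟫_𝕜 • v + (⟪v, u⟫_𝕜 - c) • v = u - c • v := by
    rw [sub_smul]; abel
  rw [hsum, norm_smul, hv, mul_one] at h
  rw [sq, sq, sq, h]

lemma pureStateDist_eq_norm_sub {u v : E} (hu : ‖u‖ = 1) (hv : ‖v‖ = 1) :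
    pureStateDist 𝕜 u v = ‖u - ⟪v, u⟫_𝕜 • v‖ := by
  have h := norm_sub_smul_sq hv u (0 : 𝕜)
  rw [zero_smul, sub_zero, sub_zero, hu, norm_inner_symm] at h
  rw [pureStateDist, show 1 - ‖⟪u, v⟫_𝕜‖ ^ 2 = ‖u - ⟪v, u⟫_𝕜 • v‖ ^ 2 by linarith,
    Real.sqrt_sq (norm_nonneg _)]

lemma pureStateDist_le_norm_sub_smul {u v : E} (hu : ‖u‖ = 1) (hv : ‖v‖ = 1) (c : 𝕜) :
    pureStateDist 𝕜 u v ≤ ‖u - c • v‖ := by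
  rw [pureStateDist_eq_norm_sub hu hv]
  refine (pow_le_pow_iff_left₀ (norm_nonneg _) (norm_nonneg _) two_ne_zero).mp ?_
  rw [norm_sub_smul_sq hv u c]
  exact le_add_of_nonneg_right (sq_nonneg _)

lemma pureStateDist_self {u : E} (hu : ‖u‖ = 1) : pureStateDist 𝕜 u u = 0 := by
  simp [pureStateDist_eq_norm_sub hu hu, inner_self_eq_norm_sq_to_K, hu]

/-- With `a = ⟪v, u⟫` and `b = ⟪w, v⟫`, the vector `u - (a * b) • w` splits as
`(u - a • v) + a • (v - b • w)`. -/
theorem pureStateDist_triangle {u v w : E} (hu : ‖u‖ = 1) (hv : ‖v‖ = 1) (hw : ‖w‖ = 1) :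
    pureStateDist 𝕜 u w ≤ pureStateDist 𝕜 u v + pureStateDist 𝕜 v w := by
  set a := ⟪v, u⟫_𝕜
  set b := ⟪w, v⟫_𝕜
  have ha : ‖a‖ ≤ 1 := by simpa [hu, hv] using norm_inner_le_norm (𝕜 := 𝕜) v u
  calc pureStateDist 𝕜 u w ≤ ‖u - (a * b) • w‖ := pureStateDist_le_norm_sub_smul hu hw _
    _ = ‖(u - a • v) + a • (v - b • w)‖ := by rw [smul_sub, smul_smul]; abel_nf
    _ ≤ ‖u - a • v‖ + ‖a‖ * ‖v - b • w‖ := (norm_add_le _ _).trans_eq (by rw [norm_smul])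
    _ ≤ ‖u - a • v‖ + ‖v - b • w‖ :=
        add_le_add_right (mul_le_of_le_one_left (norm_nonneg _) ha) _
    _ = pureStateDist 𝕜 u v + pureStateDist 𝕜 v w := by
        rw [pureStateDist_eq_norm_sub hu hv, pureStateDist_eq_norm_sub hv hw]

lemma pureStateDist_map_of_mem_unitary [CompleteSpace E] {U : E →L[𝕜] E}
    (hU : U ∈ unitary (E →L[𝕜] E)) (u v : E) :
    pureStateDist 𝕜 (U u) (U v) = pureStateDist 𝕜 u v := by
  rw [pureStateDist, pureStateDist, ContinuousLinearMap.inner_map_map_of_mem_unitary hU]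

end PureStateDist

section Hybrid

variable {𝕜 E : Type*} [RCLike 𝕜] [NormedAddCommGroup E] [InnerProductSpace 𝕜 E] [CompleteSpace E]

theorem pureStateDist_le_of_hybrid {W : ℕ → E →L[𝕜] E} {K₁ K₂ : E →L[𝕜] E} {x₁ x₂ : ℕ → E}
    {T : ℕ} {δ : ℝ} (hW : ∀ k < T, W (k + 1) ∈ unitary (E →L[𝕜] E))
    (hK₁ : K₁ ∈ unitary (E →L[𝕜] E)) (hK₂ : K₂ ∈ unitary (E →L[𝕜] E))
    (hx0 : ‖x₁ 0‖ = 1) (h0 : x₂ 0 = x₁ 0)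
    (hx₁ : ∀ k < T, x₁ (k + 1) = W (k + 1) (K₁ (x₁ k)))
    (hx₂ : ∀ k < T, x₂ (k + 1) = W (k + 1) (K₂ (x₂ k)))
    (hδ : ∀ v, ‖v‖ = 1 → pureStateDist 𝕜 (K₁ v) (K₂ v) ≤ δ) :
    pureStateDist 𝕜 (x₁ T) (x₂ T) ≤ T * δ := by
  suffices ∀ k ≤ T, ‖x₁ k‖ = 1 ∧ ‖x₂ k‖ = 1 ∧ pureStateDist 𝕜 (x₁ k) (x₂ k) ≤ k * δ from
    (this T le_rfl).2.2
  intro k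
  induction k with
  | zero => intro _; simp [h0, hx0, pureStateDist_self]
  | succ k ih =>
    intro hk
    obtain ⟨h₁, h₂, hdist⟩ := ih (Nat.le_of_succ_le hk)
    have hkT : k < T := hk
    have hK₁x : ‖K₁ (x₁ k)‖ = 1 := by rw [ContinuousLinearMap.norm_map_of_mem_unitary hK₁, h₁]
    have hK₂x₁ : ‖K₂ (x₁ k)‖ = 1 := by rw [ContinuousLinearMap.norm_map_of_mem_unitary hK₂, h₁]
    have hK₂x₂ : ‖K₂ (x₂ k)‖ = 1 := by rw [ContinuousLinearMap.norm_map_of_mem_unitary hK₂, h₂]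
    refine ⟨?_, ?_, ?_⟩
    · rw [hx₁ k hkT, ContinuousLinearMap.norm_map_of_mem_unitary (hW k hkT), hK₁x]
    · rw [hx₂ k hkT, ContinuousLinearMap.norm_map_of_mem_unitary (hW k hkT), hK₂x₂]
    · calc pureStateDist 𝕜 (x₁ (k + 1)) (x₂ (k + 1))
          = pureStateDist 𝕜 (K₁ (x₁ k)) (K₂ (x₂ k)) := by
            rw [hx₁ k hkT, hx₂ k hkT, pureStateDist_map_of_mem_unitary (hW k hkT)]
        _ ≤ pureStateDist 𝕜 (K₁ (x₁ k)) (K₂ (x₁ k)) + pureStateDist 𝕜 (K₂ (x₁ k)) (K₂ (x₂ k)) :=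
            pureStateDist_triangle hK₁x hK₂x₁ hK₂x₂
        _ ≤ δ + k * δ := by
            rw [pureStateDist_map_of_mem_unitary hK₂]
            exact add_le_add (hδ _ h₁) hdist
        _ = (k + 1 : ℕ) * δ := by push_cast; ring

end Hybrid

section NormalOperator

lemma OrthonormalBasis.inner_apply_self_eq_sum {𝕜 E ι : Type*} [RCLike 𝕜] [NormedAddCommGroup E]
    [InnerProductSpace 𝕜 E] [Fintype ι] (b : OrthonormalBasis ι 𝕜 E) {T : E →L[𝕜] E} {d : ι → 𝕜}
    (hb : ∀ i, T (b i) = d i • b i) (x : E) :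
    ⟪x, T x⟫_𝕜 = ∑ i, ‖b.repr x i‖ ^ 2 • d i := by
  have hTx : T x = ∑ i, (b.repr x i * d i) • b i := by
    conv_lhs => rw [← b.sum_repr x]
    simp only [map_sum, map_smul, hb, smul_smul]
  rw [hTx, inner_sum]
  refine Finset.sum_congr rfl fun i _ => ?_
  rw [inner_smul_right, ← inner_conj_symm, ← b.repr_apply_apply, RCLike.real_smul_eq_coe_mul,
    RCLike.ofReal_pow, ← RCLike.mul_conj]
  ring

variable {E : Type*} [NormedAddCommGroup E] [InnerProductSpace ℂ E] [FiniteDimensional ℂ E]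

/-- The joint eigenvectors of the commuting self-adjoint operators `ℜ T` and `ℑ T` are
eigenvectors of `T = ℜ T + I • ℑ T`. -/
theorem ContinuousLinearMap.exists_orthonormalBasis_apply_eq_smul_of_isStarNormal
    (T : E →L[ℂ] E) [IsStarNormal T] :
    ∃ (b : OrthonormalBasis (Fin (Module.finrank ℂ E)) ℂ E) (d : Fin (Module.finrank ℂ E) → ℂ),
      ∀ i, T (b i) = d i • b i := by
  classical
  set A : E →ₗ[ℂ] E := ((realPart T : E →L[ℂ] E) : E →ₗ[ℂ] E)
  set B : E →ₗ[ℂ] E := ((imaginaryPart T : E →L[ℂ] E) : E →ₗ[ℂ] E)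
  have hA : A.IsSymmetric := (realPart T).2.isSymmetric
  have hB : B.IsSymmetric := (imaginaryPart T).2.isSymmetric
  have hAB : Commute A B := (Commute.realPart_imaginaryPart T).map
    ContinuousLinearMap.toLinearMapRingHom
  obtain ⟨b, hb⟩ : ∃ b : OrthonormalBasis (Fin (Module.finrank ℂ E)) ℂ E, ∀ i, ∃ μ : ℂ × ℂ,
      b i ∈ Module.End.eigenspace A μ.2 ⊓ Module.End.eigenspace B μ.1 :=
    have hint := hA.directSum_isInternal_of_commute hB hAB
    have := hint.submodule_iSupIndep.fintypeNeBotOfFiniteDimensional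
    have horth := (hA.orthogonalFamily_eigenspace_inf_eigenspace hB).comp Subtype.val_injective
    have hint' := DirectSum.isInternal_ne_bot_iff.mpr hint
    ⟨hint'.subordinateOrthonormalBasis rfl horth,
      fun i => ⟨_, hint'.subordinateOrthonormalBasis_subordinate rfl i horth⟩⟩
  choose μ hμ using hb
  refine ⟨b, fun i => (μ i).2 + Complex.I * (μ i).1, fun i => ?_⟩
  obtain ⟨hAi, hBi⟩ := Submodule.mem_inf.mp (hμ i)
  rw [Module.End.mem_eigenspace_iff] at hAi hBi
  have hAi' : (realPart T : E →L[ℂ] E) (b i) = (μ i).2 • b i := hAi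
  have hBi' : (imaginaryPart T : E →L[ℂ] E) (b i) = (μ i).1 • b i := hBi
  conv_lhs => rw [← realPart_add_I_smul_imaginaryPart T]
  rw [_root_.add_apply, _root_.smul_apply, hAi', hBi', smul_smul, ← add_smul]

/-- In an eigenbasis `b` of `T`, take for `y` the vector whose `i`-th coordinate is the `ℓ²`-norm
of the `i`-th coordinates of the `x j`. -/
theorem IsStarNormal.exists_inner_self_eq_sum (T : E →L[ℂ] E) [IsStarNormal T] {κ : Type*}
    [Fintype κ] (x : κ → E) :
    ∃ y : E, ⟪y, y⟫_ℂ = ∑ j, ⟪x j, x j⟫_ℂ ∧ ⟪y, T y⟫_ℂ = ∑ j, ⟪x j, T (x j)⟫_ℂ := by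
  obtain ⟨b, d, hb⟩ := T.exists_orthonormalBasis_apply_eq_smul_of_isStarNormal
  set s : Fin (Module.finrank ℂ E) → ℝ := fun i => √(∑ j, ‖b.repr (x j) i‖ ^ 2)
  set y := b.repr.symm (WithLp.toLp 2 fun i => (s i : ℂ))
  have hy : ∀ i, ‖b.repr y i‖ ^ 2 = ∑ j, ‖b.repr (x j) i‖ ^ 2 := fun i => by
    simp only [y, LinearIsometryEquiv.apply_symm_apply, Complex.norm_real, Real.norm_eq_abs,
      sq_abs, s]
    exact Real.sq_sqrt (by positivity)
  have key : ∀ (S : E →L[ℂ] E) (e : Fin (Module.finrank ℂ E) → ℂ),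
      (∀ i, S (b i) = e i • b i) → ⟪y, S y⟫_ℂ = ∑ j, ⟪x j, S (x j)⟫_ℂ := fun S e he => by
    rw [b.inner_apply_self_eq_sum he,
      Finset.sum_congr rfl fun j _ => b.inner_apply_self_eq_sum he (x j), Finset.sum_comm]
    simp_rw [hy, Finset.sum_smul]
  exact ⟨y, by simpa using key 1 1 (by simp), key T d hb⟩

end NormalOperator

section Matrix

variable {𝕜 ι κ : Type*} [RCLike 𝕜] [Fintype ι] [Fintype κ]

lemma star_dotProduct_eq_inner (x y : ι → 𝕜) :
    star x ⬝ᵥ y = ⟪WithLp.toLp 2 x, WithLp.toLp 2 y⟫_𝕜 := by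
  rw [EuclideanSpace.inner_toLp_toLp, dotProduct_comm]

lemma inner_toLp_toEuclideanCLM_toLp [DecidableEq ι] (M : Matrix ι ι 𝕜) (x y : ι → 𝕜) :
    ⟪WithLp.toLp 2 x, toEuclideanCLM (𝕜 := 𝕜) M (WithLp.toLp 2 y)⟫_𝕜 = star x ⬝ᵥ (M *ᵥ y) := by
  rw [toEuclideanCLM_toLp, star_dotProduct_eq_inner]

lemma norm_toLp_eq_one {x : ι → 𝕜} (hx : star x ⬝ᵥ x = 1) : ‖WithLp.toLp 2 x‖ = 1 := by
  rw [star_dotProduct_eq_inner, inner_self_eq_norm_sq_to_K] at hx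
  exact (pow_eq_one_iff_of_nonneg (norm_nonneg _) two_ne_zero).mp (by exact_mod_cast hx)

lemma star_dotProduct_kronecker_one_mulVec {R : Type*} [CommSemiring R] [Star R] [DecidableEq κ]
    (V : Matrix ι ι R) (ψ : ι × κ → R) :
    star ψ ⬝ᵥ ((V ⊗ₖ (1 : Matrix κ κ R)) *ᵥ ψ) =
      ∑ j, star (fun i => ψ (i, j)) ⬝ᵥ (V *ᵥ fun i => ψ (i, j)) := by
  simp only [dotProduct, mulVec, Fintype.sum_prod_type, kroneckerMap_apply, one_apply, mul_ite,
    mul_one, mul_zero, ite_mul, zero_mul, Finset.sum_ite_eq, Finset.mem_univ, if_true,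
    Pi.star_apply]
  exact Finset.sum_comm

lemma Matrix.PosSemidef.norm_star_dotProduct_mulVec_sq_le {P : Matrix ι ι 𝕜} (hP : P.PosSemidef)
    (x y : ι → 𝕜) :
    ‖star x ⬝ᵥ (P *ᵥ y)‖ ^ 2 ≤
      RCLike.re (star x ⬝ᵥ (P *ᵥ x)) * RCLike.re (star y ⬝ᵥ (P *ᵥ y)) := by
  classical
  open scoped MatrixOrder in
  obtain ⟨B, rfl⟩ := CStarAlgebra.nonneg_iff_eq_star_mul_self.mp hP.nonneg
  have h : ∀ u v : ι → 𝕜, star u ⬝ᵥ ((star B * B) *ᵥ v) = star (B *ᵥ u) ⬝ᵥ (B *ᵥ v) := fun u v => by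
    rw [← mulVec_mulVec, dotProduct_mulVec, star_eq_conjTranspose, ← star_mulVec]
  simp only [h, star_dotProduct_eq_inner, sq]
  nth_rewrite 2 [norm_inner_symm]
  exact inner_mul_inner_self_le _ _

theorem norm_star_dotProduct_le_of_povm [DecidableEq ι] {P₀ P₁ P₂ : Matrix ι ι 𝕜}
    (hP₀ : P₀.PosSemidef) (hP₁ : P₁.PosSemidef) (hP₂ : P₂.PosSemidef) (hsum : P₀ + P₁ + P₂ = 1)
    {x y : ι → 𝕜}
    (hy₁ : star y ⬝ᵥ (P₁ *ᵥ y) = 0) (hx₂ : star x ⬝ᵥ (P₂ *ᵥ x) = 0) {ε : ℝ}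
    (hx₀ : RCLike.re (star x ⬝ᵥ (P₀ *ᵥ x)) ≤ ε) (hy₀ : RCLike.re (star y ⬝ᵥ (P₀ *ᵥ y)) ≤ ε) :
    ‖star x ⬝ᵥ y‖ ≤ ε := by
  have h₁ : P₁ *ᵥ y = 0 := (hP₁.dotProduct_mulVec_zero_iff y).mp hy₁
  have h₂ : star x ⬝ᵥ (P₂ *ᵥ y) = 0 := by
    rw [dotProduct_mulVec, ← hP₂.isHermitian.eq, ← star_mulVec,
      (hP₂.dotProduct_mulVec_zero_iff x).mp hx₂, star_zero, zero_dotProduct]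
  have hxy : star x ⬝ᵥ y = star x ⬝ᵥ (P₀ *ᵥ y) := by
    conv_lhs => rw [← one_mulVec y, ← hsum]
    rw [add_mulVec, add_mulVec, dotProduct_add, dotProduct_add, h₁, h₂, dotProduct_zero,
      add_zero, add_zero]
  have hε : 0 ≤ ε := (hP₀.re_dotProduct_nonneg x).trans hx₀
  refine (pow_le_pow_iff_left₀ (norm_nonneg _) hε two_ne_zero).mp ?_
  calc ‖star x ⬝ᵥ y‖ ^ 2 ≤ RCLike.re (star x ⬝ᵥ (P₀ *ᵥ x)) * RCLike.re (star y ⬝ᵥ (P₀ *ᵥ y)) :=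
        hxy ▸ hP₀.norm_star_dotProduct_mulVec_sq_le x y
    _ ≤ ε ^ 2 := by
        rw [sq]; exact mul_le_mul hx₀ hy₀ (hP₀.re_dotProduct_nonneg y) hε

end Matrix

section Fidelity

variable {n m : ℕ} {U₁ U₂ : Matrix (Fin n) (Fin n) ℂ}

lemma unitaryFidelity_nonneg : 0 ≤ unitaryFidelity n U₁ U₂ :=
  Real.sInf_nonneg (by rintro r ⟨ψ, -, rfl⟩; exact norm_nonneg _)

theorem unitaryFidelity_le_norm_inner_kronecker_one (hU₁ : U₁ ∈ unitaryGroup (Fin n) ℂ)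
    (hU₂ : U₂ ∈ unitaryGroup (Fin n) ℂ) {v : EuclideanSpace ℂ (Fin n × Fin m)} (hv : ‖v‖ = 1) :
    unitaryFidelity n U₁ U₂ ≤
      ‖⟪v, toEuclideanCLM (𝕜 := ℂ) ((U₁ᴴ * U₂) ⊗ₖ (1 : Matrix (Fin m) (Fin m) ℂ)) v⟫_ℂ‖ := by
  obtain ⟨ψ, rfl⟩ : ∃ ψ, WithLp.toLp 2 ψ = v := ⟨v.ofLp, v.toLp_ofLp⟩
  have hcols : ∀ M : Matrix (Fin n) (Fin n) ℂ,
      ⟪WithLp.toLp 2 ψ, toEuclideanCLM (𝕜 := ℂ) (M ⊗ₖ (1 : Matrix (Fin m) (Fin m) ℂ))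
        (WithLp.toLp 2 ψ)⟫_ℂ = ∑ j, ⟪WithLp.toLp 2 fun i => ψ (i, j),
          toEuclideanCLM (𝕜 := ℂ) M (WithLp.toLp 2 fun i => ψ (i, j))⟫_ℂ := fun M => by
    simp only [inner_toLp_toEuclideanCLM_toLp, star_dotProduct_kronecker_one_mulVec]
  have hV : U₁ᴴ * U₂ ∈ unitary (Matrix (Fin n) (Fin n) ℂ) :=
    mul_mem (star_eq_conjTranspose U₁ ▸ Unitary.star_mem hU₁) hU₂
  have := isStarNormal_of_mem_unitary (Unitary.map_mem (toEuclideanCLM (𝕜 := ℂ) (n := Fin n)) hV)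
  obtain ⟨y, hyy, hyV⟩ := IsStarNormal.exists_inner_self_eq_sum (toEuclideanCLM (𝕜 := ℂ) (U₁ᴴ * U₂))
    (fun j => WithLp.toLp 2 fun i => ψ (i, j))
  refine csInf_le ⟨0, by rintro r ⟨ψ, -, rfl⟩; exact norm_nonneg _⟩ ⟨y.ofLp, ?_, ?_⟩
  · have h1 := hcols 1
    simp only [one_kronecker_one, map_one, one_apply_eq_self] at h1
    rw [star_dotProduct_eq_inner, WithLp.toLp_ofLp, hyy, ← h1, inner_self_eq_norm_sq_to_K, hv]
    norm_num
  · rw [hcols, ← hyV, ← inner_toLp_toEuclideanCLM_toLp, WithLp.toLp_ofLp]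

theorem pureStateDist_kronecker_one_le (hU₁ : U₁ ∈ unitaryGroup (Fin n) ℂ)
    (hU₂ : U₂ ∈ unitaryGroup (Fin n) ℂ) {v : EuclideanSpace ℂ (Fin n × Fin m)} (hv : ‖v‖ = 1) :
    pureStateDist ℂ (toEuclideanCLM (𝕜 := ℂ) (U₁ ⊗ₖ (1 : Matrix (Fin m) (Fin m) ℂ)) v)
      (toEuclideanCLM (𝕜 := ℂ) (U₂ ⊗ₖ (1 : Matrix (Fin m) (Fin m) ℂ)) v) ≤
      √(1 - unitaryFidelity n U₁ U₂ ^ 2) := by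
  have hinner : ⟪toEuclideanCLM (𝕜 := ℂ) (U₁ ⊗ₖ (1 : Matrix (Fin m) (Fin m) ℂ)) v,
      toEuclideanCLM (𝕜 := ℂ) (U₂ ⊗ₖ (1 : Matrix (Fin m) (Fin m) ℂ)) v⟫_ℂ =
      ⟪v, toEuclideanCLM (𝕜 := ℂ) ((U₁ᴴ * U₂) ⊗ₖ (1 : Matrix (Fin m) (Fin m) ℂ)) v⟫_ℂ := by
    rw [← ContinuousLinearMap.adjoint_inner_right, ← ContinuousLinearMap.star_eq_adjoint,
      ← map_star, ← mul_apply_eq_comp, ← map_mul, star_eq_conjTranspose,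
      conjTranspose_kronecker, conjTranspose_one, ← mul_kronecker_mul, one_mul]
  rw [pureStateDist, hinner]
  exact Real.sqrt_le_sqrt (sub_le_sub_left (pow_le_pow_left₀ unitaryFidelity_nonneg
    (unitaryFidelity_le_norm_inner_kronecker_one hU₁ hU₂ hv) 2) 1)

end Fidelity

theorem one_sided_error_query_fidelity_bound_general (n m T : ℕ)
    (U₁ U₂ : Matrix (Fin n) (Fin n) ℂ)
    (hU₁ : U₁ ∈ Matrix.unitaryGroup (Fin n) ℂ) (hU₂ : U₂ ∈ Matrix.unitaryGroup (Fin n) ℂ)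
    (φ₀ : Fin n × Fin m → ℂ) (hφ₀ : star φ₀ ⬝ᵥ φ₀ = 1)
    (W : ℕ → Matrix (Fin n × Fin m) (Fin n × Fin m) ℂ)
    (hW : ∀ k ≤ T, W k ∈ Matrix.unitaryGroup (Fin n × Fin m) ℂ)
    (ψ₁ ψ₂ : ℕ → (Fin n × Fin m → ℂ))
    (hψ₁0 : ψ₁ 0 = W 0 *ᵥ φ₀) (hψ₂0 : ψ₂ 0 = W 0 *ᵥ φ₀)
    (hψ₁s : ∀ k < T, ψ₁ (k + 1) =
      W (k + 1) *ᵥ ((U₁ ⊗ₖ (1 : Matrix (Fin m) (Fin m) ℂ)) *ᵥ ψ₁ k))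
    (hψ₂s : ∀ k < T, ψ₂ (k + 1) =
      W (k + 1) *ᵥ ((U₂ ⊗ₖ (1 : Matrix (Fin m) (Fin m) ℂ)) *ᵥ ψ₂ k))
    (ε : ℝ)
    (P₀ P₁ P₂ : Matrix (Fin n × Fin m) (Fin n × Fin m) ℂ)
    (hP₀ : P₀.PosSemidef) (hP₁ : P₁.PosSemidef) (hP₂ : P₂.PosSemidef)
    (hsum : P₀ + P₁ + P₂ = 1)
    (he₁ : star (ψ₂ T) ⬝ᵥ (P₁ *ᵥ ψ₂ T) = 0) (he₂ : star (ψ₁ T) ⬝ᵥ (P₂ *ᵥ ψ₁ T) = 0)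
    (hi₁ : star (ψ₁ T) ⬝ᵥ (P₀ *ᵥ ψ₁ T) ≤ ((ε : ℝ) : ℂ))
    (hi₂ : star (ψ₂ T) ⬝ᵥ (P₀ *ᵥ ψ₂ T) ≤ ((ε : ℝ) : ℂ)) :
    Real.sqrt (1 - ε ^ 2) ≤
      T * Real.sqrt (1 - unitaryFidelity n U₁ U₂ ^ 2) := by
  have hCLM : ∀ {M}, M ∈ unitaryGroup (Fin n × Fin m) ℂ →
      toEuclideanCLM (𝕜 := ℂ) M ∈ unitary (EuclideanSpace ℂ (Fin n × Fin m) →L[ℂ] _) :=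
    Unitary.map_mem _
  have hK : ∀ {U}, U ∈ unitaryGroup (Fin n) ℂ →
      toEuclideanCLM (𝕜 := ℂ) (U ⊗ₖ (1 : Matrix (Fin m) (Fin m) ℂ)) ∈ unitary _ :=
    fun hU => hCLM (kronecker_mem_unitary hU (one_mem _))
  have hdist : pureStateDist ℂ (WithLp.toLp 2 (ψ₁ T)) (WithLp.toLp 2 (ψ₂ T)) ≤
      T * √(1 - unitaryFidelity n U₁ U₂ ^ 2) :=
    pureStateDist_le_of_hybrid (W := fun k => toEuclideanCLM (𝕜 := ℂ) (W k))
      (x₁ := fun k => WithLp.toLp 2 (ψ₁ k)) (x₂ := fun k => WithLp.toLp 2 (ψ₂ k))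
      (fun k hk => hCLM (hW (k + 1) hk)) (hK hU₁) (hK hU₂)
      (by rw [hψ₁0, ← toEuclideanCLM_toLp, ContinuousLinearMap.norm_map_of_mem_unitary
        (hCLM (hW 0 (Nat.zero_le T))), norm_toLp_eq_one hφ₀])
      (by rw [hψ₁0, hψ₂0])
      (fun k hk => by simp [hψ₁s k hk]) (fun k hk => by simp [hψ₂s k hk])
      (fun _ hv => pureStateDist_kronecker_one_le hU₁ hU₂ hv)
  have hoverlap : ‖star (ψ₁ T) ⬝ᵥ ψ₂ T‖ ≤ ε :=
    norm_star_dotProduct_le_of_povm hP₀ hP₁ hP₂ hsum he₁ he₂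
      (by simpa using (Complex.le_def.mp hi₁).1) (by simpa using (Complex.le_def.mp hi₂).1)
  calc √(1 - ε ^ 2) ≤ pureStateDist ℂ (WithLp.toLp 2 (ψ₁ T)) (WithLp.toLp 2 (ψ₂ T)) := by
        rw [pureStateDist, ← star_dotProduct_eq_inner]
        exact Real.sqrt_le_sqrt (by gcongr)
    _ ≤ T * √(1 - unitaryFidelity n U₁ U₂ ^ 2) := hdist

/-- A `T`-query one-sided-error (`ε`) discrimination procedure for `U₁, U₂`
forces `T·√(1 - F(U₁,U₂)²) ≥ √(1 - ε²)`. -/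
theorem one_sided_error_query_fidelity_bound (n m T : ℕ)
    (U₁ U₂ : Matrix (Fin n) (Fin n) ℂ)
    (hU₁ : U₁ ∈ Matrix.unitaryGroup (Fin n) ℂ) (hU₂ : U₂ ∈ Matrix.unitaryGroup (Fin n) ℂ)
    (φ₀ : Fin n × Fin m → ℂ) (hφ₀ : star φ₀ ⬝ᵥ φ₀ = 1)
    (W : ℕ → Matrix (Fin n × Fin m) (Fin n × Fin m) ℂ)
    (hW : ∀ k ≤ T, W k ∈ Matrix.unitaryGroup (Fin n × Fin m) ℂ)
    (ψ₁ ψ₂ : ℕ → (Fin n × Fin m → ℂ))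
    (hψ₁0 : ψ₁ 0 = W 0 *ᵥ φ₀) (hψ₂0 : ψ₂ 0 = W 0 *ᵥ φ₀)
    (hψ₁s : ∀ k < T, ψ₁ (k + 1) =
      W (k + 1) *ᵥ ((U₁ ⊗ₖ (1 : Matrix (Fin m) (Fin m) ℂ)) *ᵥ ψ₁ k))
    (hψ₂s : ∀ k < T, ψ₂ (k + 1) =
      W (k + 1) *ᵥ ((U₂ ⊗ₖ (1 : Matrix (Fin m) (Fin m) ℂ)) *ᵥ ψ₂ k))
    (ε : ℝ) (hε : ε ∈ Set.Icc (0 : ℝ) 1)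
    (P₀ P₁ P₂ : Matrix (Fin n × Fin m) (Fin n × Fin m) ℂ)
    (hP₀ : P₀.PosSemidef) (hP₁ : P₁.PosSemidef) (hP₂ : P₂.PosSemidef)
    (hsum : P₀ + P₁ + P₂ = 1)
    (he₁ : star (ψ₂ T) ⬝ᵥ (P₁ *ᵥ ψ₂ T) = 0) (he₂ : star (ψ₁ T) ⬝ᵥ (P₂ *ᵥ ψ₁ T) = 0)
    (hi₁ : star (ψ₁ T) ⬝ᵥ (P₀ *ᵥ ψ₁ T) ≤ ((ε : ℝ) : ℂ))
    (hi₂ : star (ψ₂ T) ⬝ᵥ (P₀ *ᵥ ψ₂ T) ≤ ((ε : ℝ) : ℂ)) :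
    Real.sqrt (1 - ε ^ 2) ≤
      T * Real.sqrt (1 - unitaryFidelity n U₁ U₂ ^ 2) :=
  one_sided_error_query_fidelity_bound_general n m T U₁ U₂ hU₁ hU₂ φ₀ hφ₀ W hW ψ₁ ψ₂ hψ₁0 hψ₂0 hψ₁s
    hψ₂s ε P₀ P₁ P₂ hP₀ hP₁ hP₂ hsum he₁ he₂ hi₁ hi₂
end

section
/- (Fidelity upper bound from two extreme eigenvalues, the other direction of Eq. (F).) Let W be an n×n complex unitary matrix, let θ₀ ∈ ℝ and 0 ≤ Θ ≤ π, and suppose that both exp(iθ₀) and exp(i(θ₀ + Θ)) are eigenvalues of W. Then there exists a unit vector ψ ∈ ℂⁿ with |⟨ψ, Wψ⟩| ≤ cos(Θ/2). Consequently the fidelity-type quantity inf { |⟨ψ, Wψ⟩| : ‖ψ‖ = 1 } is at most cos(Θ/2). -/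
/-!
Unitarity gives `conj a * b * ⟨x, y⟩ = ⟨x, y⟩` for eigenvectors `x`, `y` with eigenvalues `a`, `b`;
taking `x = y` shows `|a| = 1`, so eigenvectors for distinct eigenvalues are orthogonal. For unit
eigenvectors `u₁`, `u₂` the vector `ψ = (u₁ + u₂) / √2` is then a unit vector with
`⟨ψ, Wψ⟩ = (a + b) / 2` (if `a = b`, take `ψ = u₁`), and
`|e^{iθ₀} + e^{i(θ₀ + Θ)}| / 2 = |cos (Θ / 2)|`, which is `cos (Θ / 2)` for `0 ≤ Θ ≤ π`.
-/

open Matrix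
open scoped ComplexOrder

namespace Matrix

variable {ι 𝕜 : Type*} [Fintype ι] [RCLike 𝕜]

theorem exists_smul_star_dotProduct_self_eq_one {v : ι → 𝕜} (hv : v ≠ 0) :
    ∃ c : 𝕜, star (c • v) ⬝ᵥ (c • v) = 1 := by
  obtain ⟨r, hr, hrv⟩ := RCLike.pos_iff_exists_ofReal.mp (dotProduct_star_self_pos_iff.mpr hv)
  refine ⟨((√r)⁻¹ : ℝ), ?_⟩
  rw [star_smul, smul_dotProduct, dotProduct_smul, ← hrv, RCLike.star_def, RCLike.conj_ofReal,
    smul_eq_mul, smul_eq_mul, ← RCLike.ofReal_mul, ← RCLike.ofReal_mul, ← mul_assoc, ← mul_inv,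
    Real.mul_self_sqrt hr.le, inv_mul_cancel₀ hr.ne', RCLike.ofReal_one]

theorem exists_star_dotProduct_self_eq_one_and_mulVec_eq_smul {W : Matrix ι ι 𝕜} {v : ι → 𝕜}
    {a : 𝕜} (hv : v ≠ 0) (h : W *ᵥ v = a • v) :
    ∃ u : ι → 𝕜, star u ⬝ᵥ u = 1 ∧ W *ᵥ u = a • u := by
  obtain ⟨c, hc⟩ := exists_smul_star_dotProduct_self_eq_one hv
  exact ⟨c • v, hc, by rw [mulVec_smul, h, smul_comm]⟩

theorem exists_overlap_eq_midpoint_of_orthonormal {W : Matrix ι ι 𝕜} {u₁ u₂ : ι → 𝕜} {a b : 𝕜}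
    (h₁ : W *ᵥ u₁ = a • u₁) (h₂ : W *ᵥ u₂ = b • u₂) (h₁₁ : star u₁ ⬝ᵥ u₁ = 1)
    (h₂₂ : star u₂ ⬝ᵥ u₂ = 1) (h₁₂ : star u₁ ⬝ᵥ u₂ = 0) (h₂₁ : star u₂ ⬝ᵥ u₁ = 0) :
    ∃ ψ : ι → 𝕜, star ψ ⬝ᵥ ψ = 1 ∧ star ψ ⬝ᵥ (W *ᵥ ψ) = (a + b) / 2 := by
  set s : 𝕜 := (((√2)⁻¹ : ℝ) : 𝕜)
  have hs : star s * s = 1 / 2 := by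
    rw [RCLike.star_def, RCLike.conj_ofReal, ← RCLike.ofReal_mul, ← mul_inv,
      Real.mul_self_sqrt zero_le_two]
    push_cast
    ring
  refine ⟨s • (u₁ + u₂), ?_, ?_⟩
  · simp only [star_smul, star_add, smul_dotProduct, dotProduct_smul, add_dotProduct,
      dotProduct_add, h₁₁, h₂₂, h₁₂, h₂₁, smul_eq_mul]
    linear_combination 2 * hs
  · simp only [mulVec_smul, mulVec_add, h₁, h₂, star_smul, star_add, smul_dotProduct,
      dotProduct_smul, add_dotProduct, dotProduct_add, h₁₁, h₂₂, h₁₂, h₂₁, smul_eq_mul]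
    linear_combination (a + b) * hs

variable [DecidableEq ι]

theorem star_mulVec_dotProduct_mulVec_of_mem_unitaryGroup {W : Matrix ι ι 𝕜}
    (hW : W ∈ unitaryGroup ι 𝕜) (x y : ι → 𝕜) :
    star (W *ᵥ x) ⬝ᵥ (W *ᵥ y) = star x ⬝ᵥ y := by
  rw [star_mulVec, dotProduct_mulVec, vecMul_vecMul, ← star_eq_conjTranspose,
    mem_unitaryGroup_iff'.mp hW, vecMul_one]

theorem star_mul_mul_star_dotProduct_of_mulVec_eq_smul {W : Matrix ι ι 𝕜}
    (hW : W ∈ unitaryGroup ι 𝕜) {x y : ι → 𝕜} {a b : 𝕜}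
    (hx : W *ᵥ x = a • x) (hy : W *ᵥ y = b • y) :
    star a * b * (star x ⬝ᵥ y) = star x ⬝ᵥ y := by
  have h := star_mulVec_dotProduct_mulVec_of_mem_unitaryGroup hW x y
  rwa [hx, hy, star_smul, smul_dotProduct, dotProduct_smul, smul_eq_mul, smul_eq_mul,
    ← mul_assoc] at h

theorem star_dotProduct_eq_zero_of_mulVec_eq_smul_of_ne {W : Matrix ι ι 𝕜}
    (hW : W ∈ unitaryGroup ι 𝕜) {x y : ι → 𝕜} {a b : 𝕜}
    (hx : W *ᵥ x = a • x) (hy : W *ᵥ y = b • y) (hab : a ≠ b) :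
    star x ⬝ᵥ y = 0 := by
  obtain haa | hxx :=
    mul_left_eq_self₀.mp (star_mul_mul_star_dotProduct_of_mulVec_eq_smul hW hx hx)
  · obtain hab' | hxy :=
      mul_left_eq_self₀.mp (star_mul_mul_star_dotProduct_of_mulVec_eq_smul hW hx hy)
    · exact absurd (mul_left_cancel₀ (left_ne_zero_of_mul_eq_one haa) (haa.trans hab'.symm)) hab
    · exact hxy
  · rw [dotProduct_star_self_eq_zero.mp hxx, star_zero, zero_dotProduct]

theorem exists_overlap_eq_midpoint_of_mulVec_eq_smul {W : Matrix ι ι 𝕜}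
    (hW : W ∈ unitaryGroup ι 𝕜) {v₁ v₂ : ι → 𝕜} {a b : 𝕜} (hv₁ : v₁ ≠ 0) (hv₂ : v₂ ≠ 0)
    (h₁ : W *ᵥ v₁ = a • v₁) (h₂ : W *ᵥ v₂ = b • v₂) :
    ∃ ψ : ι → 𝕜, star ψ ⬝ᵥ ψ = 1 ∧ star ψ ⬝ᵥ (W *ᵥ ψ) = (a + b) / 2 := by
  obtain ⟨u₁, hu₁, hWu₁⟩ := exists_star_dotProduct_self_eq_one_and_mulVec_eq_smul hv₁ h₁
  obtain ⟨u₂, hu₂, hWu₂⟩ := exists_star_dotProduct_self_eq_one_and_mulVec_eq_smul hv₂ h₂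
  obtain rfl | hab := eq_or_ne a b
  · refine ⟨u₁, hu₁, ?_⟩
    rw [hWu₁, dotProduct_smul, hu₁, smul_eq_mul, mul_one, add_self_div_two]
  · exact exists_overlap_eq_midpoint_of_orthonormal hWu₁ hWu₂ hu₁ hu₂
      (star_dotProduct_eq_zero_of_mulVec_eq_smul_of_ne hW hWu₁ hWu₂ hab)
      (star_dotProduct_eq_zero_of_mulVec_eq_smul_of_ne hW hWu₂ hWu₁ hab.symm)

end Matrix

theorem Complex.norm_exp_add_exp_div_two (θ₀ Θ : ℝ) :
    ‖(exp (I * θ₀) + exp (I * (θ₀ + Θ))) / 2‖ = |Real.cos (Θ / 2)| := by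
  have h : exp (I * θ₀) + exp (I * (θ₀ + Θ)) =
      exp ((θ₀ + Θ / 2 : ℝ) * I) * (2 * cos (Θ / 2 : ℝ)) := by
    rw [two_cos, mul_add (exp _), ← exp_add, ← exp_add]
    push_cast
    ring_nf
  rw [h, norm_div, norm_mul, norm_exp_ofReal_mul_I, norm_mul, ← ofReal_cos, norm_real,
    Real.norm_eq_abs, Complex.norm_two]
  ring

/-- The other direction of Eq. (F): if `exp(iθ₀)` and `exp(i(θ₀+Θ))` (with `0 ≤ Θ ≤ π`)
are both eigenvalues of a unitary `W`, then some unit vector `ψ` has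
`|⟨ψ, Wψ⟩| ≤ cos(Θ/2)`; consequently `inf {|⟨ψ, Wψ⟩|} ≤ cos(Θ/2)`. -/
theorem exists_overlap_le_cos_of_extreme_eigenvalues (n : ℕ)
    (W : Matrix (Fin n) (Fin n) ℂ) (hW : W ∈ Matrix.unitaryGroup (Fin n) ℂ)
    (Θ θ₀ : ℝ) (hΘ0 : 0 ≤ Θ) (hΘπ : Θ ≤ Real.pi)
    (v₁ : Fin n → ℂ) (hv₁ : v₁ ≠ 0)
    (hev₁ : W *ᵥ v₁ = Complex.exp (Complex.I * θ₀) • v₁)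
    (v₂ : Fin n → ℂ) (hv₂ : v₂ ≠ 0)
    (hev₂ : W *ᵥ v₂ = Complex.exp (Complex.I * (θ₀ + Θ)) • v₂) :
    (∃ ψ : Fin n → ℂ, star ψ ⬝ᵥ ψ = 1 ∧
        ‖star ψ ⬝ᵥ (W *ᵥ ψ)‖ ≤ Real.cos (Θ / 2)) ∧
      sInf { r : ℝ | ∃ ψ : Fin n → ℂ, star ψ ⬝ᵥ ψ = 1 ∧
          r = ‖star ψ ⬝ᵥ (W *ᵥ ψ)‖ } ≤ Real.cos (Θ / 2) := by
  obtain ⟨ψ, hψ, hoverlap⟩ := exists_overlap_eq_midpoint_of_mulVec_eq_smul hW hv₁ hv₂ hev₁ hev₂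
  have hcos : 0 ≤ Real.cos (Θ / 2) :=
    Real.cos_nonneg_of_mem_Icc ⟨by linarith [Real.pi_pos], by linarith⟩
  have hle : ‖star ψ ⬝ᵥ (W *ᵥ ψ)‖ ≤ Real.cos (Θ / 2) := by
    rw [hoverlap, Complex.norm_exp_add_exp_div_two, abs_of_nonneg hcos]
  exact ⟨⟨ψ, hψ, hle⟩,
    csInf_le_of_le ⟨0, by rintro _ ⟨_, -, rfl⟩; exact norm_nonneg _⟩ ⟨ψ, hψ, rfl⟩ hle⟩
end
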